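/- arXiv:1504.08016 — 6 statements merged into one kernel-verified Lean document; each statement's English description precedes it below -/
import Mathlib

section
/- Let E be the space of differentiable real functions on [-π, π] with the sup norm. Equip the domain with the pointwise order and the codomain with the order x ≤ y iff x(t) ≤ y(t) and x'(t) ≤ y'(t) for all t. Then the set B = {t ↦ cos(k t) : k ∈ ℕ} is order bounded in the pointwise order (being contained in [-1, 1]) but is not order bounded in the second order; hence the identity operator between these two ordered normed spaces is topologically continuous but not order bounded. -/
/-! If `cos (k ·) ≤ y` in the derivative order, then `y - cos (k ·)` is nondecreasing on
`[-π / k, 0]`, so `y` rises by at least `cos 0 - cos (-π) = 2` over an interval of length `π / k`.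
As `k → ∞` this contradicts the continuity of `y` at `0`. -/

open Set Real

/-- The "derivative order" on differentiable functions on `[-π, π]`:
`x ≤ y` iff `x t ≤ y t` and `x' t ≤ y' t` for all `t ∈ [-π, π]`. -/
def derivLe (x y : ℝ → ℝ) : Prop :=
  ∀ t ∈ Set.Icc (-Real.pi) Real.pi, x t ≤ y t ∧ deriv x t ≤ deriv y t

lemma sub_le_sub_of_deriv_le {f g : ℝ → ℝ} {a b : ℝ} (hab : a ≤ b)
    (hf : Differentiable ℝ f) (hg : Differentiable ℝ g)
    (h : ∀ t ∈ Ioo a b, deriv f t ≤ deriv g t) : f b - f a ≤ g b - g a := by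
  have hgf : Differentiable ℝ (g - f) := hg.sub hf
  have hmono : MonotoneOn (g - f) (Icc a b) := by
    refine monotoneOn_of_deriv_nonneg (convex_Icc a b) hgf.continuous.continuousOn
      (fun t _ => (hgf t).differentiableWithinAt) ?_
    intro t ht
    rw [interior_Icc] at ht
    rw [deriv_sub (hg t) (hf t), sub_nonneg]
    exact h t ht
  have := hmono (left_mem_Icc.2 hab) (right_mem_Icc.2 hab) hab
  simp only [Pi.sub_apply] at this
  linarith

lemma two_le_sub_of_derivLe_cos {y : ℝ → ℝ} (hy : Differentiable ℝ y) {k : ℕ} (hk : 0 < k)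
    (h : derivLe (fun t => cos (k * t)) y) : 2 ≤ y 0 - y (-π / k) := by
  have hk' : (1 : ℝ) ≤ k := by exact_mod_cast hk
  have hleft : -π ≤ -π / k := by
    rw [neg_div, neg_le_neg_iff]
    exact div_le_self pi_pos.le hk'
  have hright : -π / k ≤ 0 :=
    div_nonpos_of_nonpos_of_nonneg (neg_nonpos.2 pi_pos.le) (by positivity)
  have hinc := sub_le_sub_of_deriv_le hright (by fun_prop) hy fun t ht =>
    (h t ⟨hleft.trans ht.1.le, ht.2.le.trans pi_pos.le⟩).2
  have hcos : cos (k * (-π / k)) = -1 := by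
    rw [mul_div_cancel₀ _ (by positivity : (k : ℝ) ≠ 0), cos_neg, cos_pi]
  simp only [mul_zero, cos_zero, hcos] at hinc
  linarith

/-- The family `B = {t ↦ cos (k t) : k ∈ ℕ}` of differentiable functions on `[-π, π]`
is order bounded for the pointwise order (it lies in the interval `[-1, 1]`), but it is
not order bounded for the derivative order: no pair of differentiable functions `x ≤ y`
dominates it.  Hence the identity operator between these two ordered normed spaces is
topologically continuous but not order bounded. -/
theorem stmt3 :
    (∀ k : ℕ, ∀ t ∈ Set.Icc (-Real.pi) Real.pi,
        -1 ≤ Real.cos (k * t) ∧ Real.cos (k * t) ≤ 1) ∧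
    ¬ ∃ x y : ℝ → ℝ, Differentiable ℝ x ∧ Differentiable ℝ y ∧
        ∀ k : ℕ, derivLe x (fun t => Real.cos (k * t)) ∧
          derivLe (fun t => Real.cos (k * t)) y := by
  refine ⟨fun k t _ => ⟨neg_one_le_cos _, cos_le_one _⟩, ?_⟩
  rintro ⟨_, y, _, hy, h⟩
  have hlim : Filter.Tendsto (fun k : ℕ => y (-π / k)) Filter.atTop (nhds (y 0)) :=
    (hy.continuous.tendsto 0).comp (by simpa using tendsto_const_div_atTop_nhds_zero_nat (-π))
  have : y 0 ≤ y 0 - 2 := by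
    refine le_of_tendsto hlim ?_
    filter_upwards [Filter.eventually_gt_atTop 0] with k hk
    linarith [two_le_sub_of_derivLe_cos hy hk (h k).2]
  linarith
end

section
/- Suppose (E₁, τ₁) is a locally solid Riesz space and (E₂, τ₂) is an ordered topological vector space having an order bounded τ₂-neighborhood of zero. Then every topologically continuous linear operator T : E₁ → E₂ is order bounded; consequently the topologically continuous operators form a vector subspace of the order bounded operators. -/
/-! Order bounded sets of a locally solid Riesz space are absorbed by every neighbourhood of zero,
so they are von Neumann bounded; a continuous linear map preserves von Neumann boundedness; and
when the target has an order bounded neighbourhood `V ⊆ [a, b]` of zero, a von Neumann bounded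
set lies in some `r • V ⊆ [r • a, r • b]`, hence is order bounded. -/

open Filter Topology Bornology Set
open scoped Pointwise

def SolidSet {E : Type*} [Lattice E] [AddCommGroup E] (S : Set E) : Prop :=
  ∀ ⦃x y : E⦄, |x| ≤ |y| → y ∈ S → x ∈ S

def LocallySolid (E : Type*) [Lattice E] [AddCommGroup E] [TopologicalSpace E] : Prop :=
  (𝓝 (0 : E)).HasBasis (fun S : Set E => S ∈ 𝓝 (0 : E) ∧ SolidSet S) id

section LatticeOrderedModule

variable {R M : Type*} [Lattice M] [AddCommGroup M]

theorem abs_smul_le_smul_of_abs_le [Ring R] [PartialOrder R] [Module R M] [PosSMulMono R M]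
    {r : R} (hr : 0 ≤ r) {x c : M} (h : |x| ≤ c) : |r • x| ≤ r • c := by
  refine abs_le'.2 ⟨smul_le_smul_of_nonneg_left ((le_abs_self x).trans h) hr, ?_⟩
  rw [← smul_neg]
  exact smul_le_smul_of_nonneg_left ((neg_le_abs x).trans h) hr

theorem abs_smul_le_abs_smul_of_abs_le [Ring R] [LinearOrder R] [IsOrderedRing R] [Module R M]
    [PosSMulMono R M] (r : R) {x c : M} (h : |x| ≤ c) : |r • x| ≤ |r| • c := by
  rcases le_total 0 r with hr | hr
  · rw [abs_of_nonneg hr]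
    exact abs_smul_le_smul_of_abs_le hr h
  · rw [abs_of_nonpos hr, ← neg_smul_neg]
    exact abs_smul_le_smul_of_abs_le (neg_nonneg.2 hr) (by rwa [abs_neg])

end LatticeOrderedModule

theorem abs_le_sup_abs_abs {α : Type*} [Lattice α] [AddCommGroup α] [AddLeftMono α] {a b c : α}
    (hab : a ≤ b) (hbc : b ≤ c) : |b| ≤ |a| ⊔ |c| :=
  abs_le'.2 ⟨hbc.trans ((le_abs_self c).trans le_sup_right),
    (neg_le_neg_iff.2 hab).trans ((neg_le_abs a).trans le_sup_left)⟩

theorem smul_Icc_subset_Icc_smul {R M : Type*} [Semiring R] [PartialOrder R] [AddCommMonoid M]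
    [Preorder M] [Module R M] [PosSMulMono R M] {r : R} (hr : 0 ≤ r) (a b : M) :
    r • Icc a b ⊆ Icc (r • a) (r • b) := by
  rintro _ ⟨y, hy, rfl⟩
  exact ⟨smul_le_smul_of_nonneg_left hy.1 hr, smul_le_smul_of_nonneg_left hy.2 hr⟩

section LocallySolid

variable {E : Type*} [Lattice E] [AddCommGroup E] [AddLeftMono E] [Module ℝ E] [PosSMulMono ℝ E]
  [TopologicalSpace E] [ContinuousSMul ℝ E]

theorem SolidSet.absorbs_setOf_abs_le {S : Set E} (hS : SolidSet S) (hS₀ : S ∈ 𝓝 0) {c : E}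
    (hc : 0 ≤ c) : Absorbs ℝ S {x | |x| ≤ c} := by
  rw [absorbs_iff_eventually_nhds_zero (mem_of_mem_nhds hS₀)]
  have hc₀ : Tendsto (fun t : ℝ => |t| • c) (𝓝 0) (𝓝 0) :=
    Continuous.tendsto' (by fun_prop) 0 0 (by simp)
  filter_upwards [hc₀ hS₀] with t ht x hx
  refine hS ?_ ht
  rw [abs_of_nonneg (smul_nonneg (abs_nonneg t) hc)]
  exact abs_smul_le_abs_smul_of_abs_le t hx

theorem LocallySolid.isVonNBounded_Icc (h : LocallySolid E) (a b : E) :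
    IsVonNBounded ℝ (Icc a b) := by
  intro V hV
  obtain ⟨S, ⟨hS₀, hS⟩, hSV⟩ := h.mem_iff.1 hV
  have hSab : Absorbs ℝ S {x | |x| ≤ |a| ⊔ |b|} :=
    hS.absorbs_setOf_abs_le hS₀ (le_sup_of_le_left (abs_nonneg a))
  exact (hSab.mono_left hSV).mono_right fun x hx => abs_le_sup_abs_abs hx.1 hx.2

end LocallySolid

theorem Bornology.IsVonNBounded.subset_Icc_smul {F : Type*} [AddCommGroup F] [Preorder F]
    [Module ℝ F] [PosSMulMono ℝ F] [TopologicalSpace F] {V s : Set F} {a b : F}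
    (hV : V ∈ 𝓝 0) (hVab : V ⊆ Icc a b) (hs : IsVonNBounded ℝ s) :
    ∃ r : ℝ, 0 < r ∧ s ⊆ Icc (r • a) (r • b) := by
  obtain ⟨r, hr, hsr⟩ := (hs hV).exists_pos
  exact ⟨r, hr, (hsr r (by rw [Real.norm_of_nonneg hr.le])).trans
    ((smul_set_mono hVab).trans (smul_Icc_subset_Icc_smul hr.le a b))⟩

theorem stmt4_general {E₁ E₂ : Type*}
    [AddCommGroup E₁] [Lattice E₁] [Module ℝ E₁]
    [CovariantClass E₁ E₁ (· + ·) (· ≤ ·)] [PosSMulMono ℝ E₁]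
    [TopologicalSpace E₁] [ContinuousSMul ℝ E₁]
    [AddCommGroup E₂] [PartialOrder E₂] [Module ℝ E₂] [PosSMulMono ℝ E₂]
    [TopologicalSpace E₂]
    (hls : LocallySolid E₁)
    (hV : ∃ V ∈ 𝓝 (0 : E₂), ∃ a b : E₂, V ⊆ Set.Icc a b)
    (T : E₁ →ₗ[ℝ] E₂) (hT : Continuous T) :
    ∀ B : Set E₁, (∃ a b : E₁, B ⊆ Set.Icc a b) →
      ∃ a b : E₂, T '' B ⊆ Set.Icc a b := by
  rintro B ⟨a, b, hB⟩
  obtain ⟨V, hV₀, a', b', hVab⟩ := hV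
  have hTB : IsVonNBounded ℝ (T '' B) :=
    ((hls.isVonNBounded_Icc a b).subset hB).image (⟨T, hT⟩ : E₁ →L[ℝ] E₂)
  obtain ⟨r, -, hr⟩ := hTB.subset_Icc_smul hV₀ hVab
  exact ⟨r • a', r • b', hr⟩

/-- If `E₁` is a locally solid Riesz space and `E₂` is an ordered topological vector space
with an order bounded neighborhood of zero, then every topologically continuous linear
operator `T : E₁ → E₂` is order bounded (maps order bounded sets to order bounded sets);
consequently the topologically continuous operators form a vector subspace of the order
bounded operators. -/
theorem stmt4 {E₁ E₂ : Type*}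
    [AddCommGroup E₁] [Lattice E₁] [Module ℝ E₁]
    [CovariantClass E₁ E₁ (· + ·) (· ≤ ·)] [PosSMulMono ℝ E₁]
    [TopologicalSpace E₁] [IsTopologicalAddGroup E₁] [ContinuousSMul ℝ E₁]
    [AddCommGroup E₂] [PartialOrder E₂] [IsOrderedAddMonoid E₂] [Module ℝ E₂] [PosSMulMono ℝ E₂]
    [TopologicalSpace E₂] [IsTopologicalAddGroup E₂] [ContinuousSMul ℝ E₂]
    (hls : LocallySolid E₁)
    (hV : ∃ V ∈ 𝓝 (0 : E₂), ∃ a b : E₂, V ⊆ Set.Icc a b)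
    (T : E₁ →ₗ[ℝ] E₂) (hT : Continuous T) :
    ∀ B : Set E₁, (∃ a b : E₁, B ⊆ Set.Icc a b) →
      ∃ a b : E₂, T '' B ⊆ Set.Icc a b :=
  stmt4_general hls hV T hT
end

section
/- (Generalized Nakano–Roberts Theorem) Suppose (E₁, τ₁) is a locally solid Riesz space and (E₂, τ₂) is a Dedekind complete locally solid Riesz space having an order bounded τ₂-neighborhood of zero. Then the space L_TC(E₁, E₂) of topologically continuous operators is an ideal of the Riesz space L_B(E₁, E₂) of order bounded operators; that is, if S is order bounded, T is topologically continuous, and |S| ≤ |T| in L_B(E₁, E₂), then S is topologically continuous. -/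
/-!
For `u ≥ 0` the supremum `sup {T y | |y| ≤ u}` exists by Dedekind completeness, is additive in
`u` by the Riesz decomposition property, and therefore extends to an operator dominating `±T`;
hence it equals `|T| u` (Riesz–Kantorovich). If `T` maps a small solid neighbourhood `U` into
`ε • V`, where `V` is a neighbourhood of zero bounded above by `b`, then every `y` with
`|y| ≤ |x|`, `x ∈ U`, lies in `U`, so `0 ≤ |T| |x| ≤ ε • b`. Since the neighbourhoods of zero
are solid, `|S x| ≤ |S| |x| ≤ |T| |x|` turns this into the continuity of `S`.
-/

open Filter Topology Bornology Set

/-- The order on operators: `S ≤ T` iff `T - S` is positive, i.e. `S x ≤ T x` for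
all `x ≥ 0`. -/
def opLe {E₁ E₂ : Type*} [AddCommGroup E₁] [AddCommGroup E₂] [Lattice E₁] [Lattice E₂]
    [Module ℝ E₁] [Module ℝ E₂] (S T : E₁ →ₗ[ℝ] E₂) : Prop :=
  ∀ x : E₁, 0 ≤ x → S x ≤ T x

/-- `A` is the modulus `|S|` of the operator `S` in the operator order:
`A` is the least upper bound of `S` and `-S`. -/
def IsModulus {E₁ E₂ : Type*} [AddCommGroup E₁] [AddCommGroup E₂] [Lattice E₁] [Lattice E₂]
    [Module ℝ E₁] [Module ℝ E₂] (S A : E₁ →ₗ[ℝ] E₂) : Prop :=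
  opLe S A ∧ opLe (-S) A ∧ ∀ R : E₁ →ₗ[ℝ] E₂, opLe S R → opLe (-S) R → opLe A R

open scoped Pointwise

section LatticeOrderedGroup

variable {E : Type*} [AddCommGroup E] [Lattice E] [CovariantClass E E (· + ·) (· ≤ ·)]

theorem abs_sub_le_abs_add_abs (a b : E) : |a - b| ≤ |a| + |b| := by
  simpa only [sub_eq_add_neg, abs_neg] using abs_add_le a (-b)

/-- The Riesz decomposition property. -/
theorem setOf_abs_le_add {u v : E} (hu : 0 ≤ u) (hv : 0 ≤ v) :
    {y : E | |y| ≤ u + v} = {y | |y| ≤ u} + {y | |y| ≤ v} := by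
  ext y
  refine ⟨fun hy => ?_, ?_⟩
  · have hy_le : y ≤ u + v := (le_abs_self y).trans hy
    have hy_ge : -(u + v) ≤ y := neg_le.mp ((neg_le_abs y).trans hy)
    refine ⟨(y ⊓ u) ⊔ -u, ?_, y - ((y ⊓ u) ⊔ -u), ?_, add_sub_cancel _ _⟩
    · rw [Set.mem_ofPred_eq, abs_le', neg_sup, neg_neg]
      exact ⟨sup_le inf_le_right (neg_le_self hu), inf_le_right⟩
    · have e : y - ((y ⊓ u) ⊔ -u) = (0 ⊔ (y - u)) ⊓ (y + u) := by
        rw [sub_sup, sub_inf, sub_self, sub_neg_eq_add]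
      rw [Set.mem_ofPred_eq, e, abs_le']
      refine ⟨inf_le_left.trans (sup_le hv ?_), ?_⟩
      · rw [sub_le_iff_le_add]
        exact hy_le.trans_eq (add_comm u v)
      · rw [neg_le]
        refine le_inf ((neg_nonpos.mpr hv).trans le_sup_left) ?_
        rw [← sub_le_iff_le_add, sub_eq_add_neg, ← neg_add, add_comm]
        exact hy_ge
  · rintro ⟨y₁, hy₁, y₂, hy₂, rfl⟩
    exact (abs_add_le y₁ y₂).trans (add_le_add hy₁ hy₂)

variable {𝕜 : Type*} [Field 𝕜] [LinearOrder 𝕜] [IsStrictOrderedRing 𝕜] [Module 𝕜 E]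
  [PosSMulMono 𝕜 E]

theorem abs_smul_of_nonneg {c : 𝕜} (hc : 0 ≤ c) (a : E) : |c • a| = c • |a| := by
  rcases hc.eq_or_lt with rfl | hc
  · simp
  · rw [abs, abs, ← smul_neg]
    exact ((OrderIso.smulRight hc).map_sup a (-a)).symm

theorem setOf_abs_le_smul {c : 𝕜} (hc : 0 < c) (u : E) :
    {y : E | |y| ≤ c • u} = c • {y | |y| ≤ u} := by
  ext y
  rw [Set.mem_smul_set_iff_inv_smul_mem₀ hc.ne', Set.mem_ofPred_eq, Set.mem_ofPred_eq,
    abs_smul_of_nonneg (inv_nonneg.mpr hc.le), inv_smul_le_iff_of_pos hc]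

/-- The extension is `x ↦ p x⁺ - p x⁻`. -/
theorem exists_linearMap_eq_on_nonneg {F : Type*} [AddCommGroup F] [Module 𝕜 F] (p : E → F)
    (hadd : ∀ u v, 0 ≤ u → 0 ≤ v → p (u + v) = p u + p v)
    (hsmul : ∀ (c : 𝕜) u, 0 < c → 0 ≤ u → p (c • u) = c • p u) :
    ∃ R : E →ₗ[𝕜] F, ∀ u, 0 ≤ u → R u = p u := by
  have hp0 : p 0 = 0 := by simpa using hadd 0 0 le_rfl le_rfl
  have hdiff : ∀ x a b : E, 0 ≤ a → 0 ≤ b → x = a - b → p x⁺ - p x⁻ = p a - p b := by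
    intro x a b ha hb hx
    have hx' : x⁺ + b = a + x⁻ := by
      rw [← sub_eq_sub_iff_add_eq_add, posPart_sub_negPart, hx]
    rw [sub_eq_sub_iff_add_eq_add, ← hadd _ _ (posPart_nonneg x) hb,
      ← hadd _ _ ha (negPart_nonneg x), hx']
  refine ⟨{ toFun := fun x => p x⁺ - p x⁻, map_add' := ?_, map_smul' := ?_ }, ?_⟩
  · intro x y
    rw [hdiff (x + y) (x⁺ + y⁺) (x⁻ + y⁻) (add_nonneg (posPart_nonneg x) (posPart_nonneg y))
        (add_nonneg (negPart_nonneg x) (negPart_nonneg y)) (by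
          rw [add_sub_add_comm, posPart_sub_negPart, posPart_sub_negPart]),
      hadd _ _ (posPart_nonneg x) (posPart_nonneg y),
      hadd _ _ (negPart_nonneg x) (negPart_nonneg y)]
    abel
  · intro c x
    simp only [RingHom.id_apply]
    rcases lt_trichotomy c 0 with hc | rfl | hc
    · have hc' : 0 < -c := neg_pos.mpr hc
      rw [hdiff (c • x) ((-c) • x⁻) ((-c) • x⁺) (smul_nonneg hc'.le (negPart_nonneg x))
          (smul_nonneg hc'.le (posPart_nonneg x)) (by
            rw [← smul_sub, ← neg_sub, posPart_sub_negPart, smul_neg, neg_smul, neg_neg]),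
        hsmul _ _ hc' (negPart_nonneg x), hsmul _ _ hc' (posPart_nonneg x), ← smul_sub,
        neg_smul, ← smul_neg, neg_sub]
    · simp
    · rw [hdiff (c • x) (c • x⁺) (c • x⁻) (smul_nonneg hc.le (posPart_nonneg x))
          (smul_nonneg hc.le (negPart_nonneg x)) (by rw [← smul_sub, posPart_sub_negPart]),
        hsmul _ _ hc (posPart_nonneg x), hsmul _ _ hc (negPart_nonneg x), smul_sub]
  · intro u hu
    simp [posPart_eq_self.mpr hu, negPart_eq_zero.mpr hu, hp0]

end LatticeOrderedGroup

section IsModulus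

variable {E F : Type*} [AddCommGroup E] [Lattice E] [Module ℝ E]
  [AddCommGroup F] [Lattice F] [Module ℝ F] {T A : E →ₗ[ℝ] F}

theorem IsModulus.abs_apply_le_of_nonneg (h : IsModulus T A) {u : E} (hu : 0 ≤ u) :
    |T u| ≤ A u :=
  abs_le'.mpr ⟨h.1 u hu, h.2.1 u hu⟩

variable [CovariantClass E E (· + ·) (· ≤ ·)] [CovariantClass F F (· + ·) (· ≤ ·)]

theorem IsModulus.abs_apply_le (h : IsModulus T A) (x : E) : |T x| ≤ A |x| :=
  calc |T x| = |T x⁺ - T x⁻| := by rw [← map_sub, posPart_sub_negPart]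
    _ ≤ |T x⁺| + |T x⁻| := abs_sub_le_abs_add_abs _ _
    _ ≤ A x⁺ + A x⁻ := add_le_add (h.abs_apply_le_of_nonneg (posPart_nonneg x))
        (h.abs_apply_le_of_nonneg (negPart_nonneg x))
    _ = A |x| := by rw [← map_add, posPart_add_negPart]

theorem IsModulus.apply_le_of_abs_le (h : IsModulus T A) {y u : E} (hy : |y| ≤ u) :
    T y ≤ A u := by
  have hA : A |y| ≤ A u := by
    have := (abs_nonneg _).trans (h.abs_apply_le_of_nonneg (sub_nonneg.mpr hy))
    rwa [map_sub, sub_nonneg] at this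
  exact (le_abs_self _).trans ((h.abs_apply_le y).trans hA)

end IsModulus

section RieszKantorovich

variable {E F : Type*} [AddCommGroup E] [Lattice E] [CovariantClass E E (· + ·) (· ≤ ·)]
  [Module ℝ E] [AddCommGroup F] [Lattice F] [Module ℝ F] {T A : E →ₗ[ℝ] F} {p : E → F}

theorem map_smul_of_isLUB_image_abs_le [PosSMulMono ℝ E] [PosSMulMono ℝ F]
    (hp : ∀ u, 0 ≤ u → IsLUB (T '' {y | |y| ≤ u}) (p u))
    {c : ℝ} (hc : 0 < c) {u : E} (hu : 0 ≤ u) : p (c • u) = c • p u := by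
  refine (hp _ (smul_nonneg hc.le hu)).unique ?_
  rw [setOf_abs_le_smul hc, image_smul_set]
  exact (OrderIso.smulRight hc).isLUB_image'.mpr (hp u hu)

variable [CovariantClass F F (· + ·) (· ≤ ·)]

theorem map_add_of_isLUB_image_abs_le (hp : ∀ u, 0 ≤ u → IsLUB (T '' {y | |y| ≤ u}) (p u))
    {u v : E} (hu : 0 ≤ u) (hv : 0 ≤ v) : p (u + v) = p u + p v := by
  refine (hp _ (add_nonneg hu hv)).unique ?_
  rw [setOf_abs_le_add hu hv, Set.image_add]
  exact (hp u hu).add (hp v hv)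

/-- The Riesz–Kantorovich formula. -/
theorem IsModulus.isLUB_image_abs_le [PosSMulMono ℝ E] [PosSMulMono ℝ F]
    (hded : ∀ B : Set F, B.Nonempty → BddAbove B → ∃ s, IsLUB B s)
    (h : IsModulus T A) {u : E} (hu : 0 ≤ u) : IsLUB (T '' {y | |y| ≤ u}) (A u) := by
  have hA : ∀ u, A u ∈ upperBounds (T '' {y | |y| ≤ u}) := by
    rintro u _ ⟨y, hy, rfl⟩
    exact h.apply_le_of_abs_le hy
  have hsup : ∀ u, ∃ s, 0 ≤ u → IsLUB (T '' {y | |y| ≤ u}) s := by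
    intro u
    by_cases hu : 0 ≤ u
    · obtain ⟨s, hs⟩ :=
        hded (T '' {y | |y| ≤ u}) ⟨0, 0, by simpa using hu, map_zero T⟩ ⟨A u, hA u⟩
      exact ⟨s, fun _ => hs⟩
    · exact ⟨0, fun hu' => absurd hu' hu⟩
  choose p hp using hsup
  obtain ⟨R, hR⟩ := exists_linearMap_eq_on_nonneg p
    (fun _ _ hu hv => map_add_of_isLUB_image_abs_le hp hu hv)
    (fun _ _ hc hu => map_smul_of_isLUB_image_abs_le hp hc hu)
  have hTR : opLe T R := fun x hx => by
    rw [hR x hx]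
    exact (hp x hx).1 ⟨x, by simp [abs_of_nonneg hx], rfl⟩
  have hTR' : opLe (-T) R := fun x hx => by
    rw [hR x hx]
    exact (hp x hx).1 ⟨-x, by simp [abs_of_nonneg hx], by simp⟩
  have hAp : A u = p u :=
    le_antisymm (hR u hu ▸ h.2.2 R hTR hTR' u hu) ((hp u hu).2 (hA u))
  exact hAp ▸ hp u hu

end RieszKantorovich

theorem LocallySolid.tendsto_zero_of_abs_le {F : Type*} [AddCommGroup F] [Lattice F]
    [TopologicalSpace F] (hF : LocallySolid F) {α : Type*} {l : Filter α} {f g : α → F}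
    (hg : Tendsto g l (𝓝 0)) (hfg : ∀ᶠ x in l, |f x| ≤ |g x|) : Tendsto f l (𝓝 0) := by
  rw [hF.tendsto_right_iff]
  rintro W ⟨hW, hWs⟩
  filter_upwards [hg hW, hfg] with x hgx hx using hWs hx hgx

theorem exists_pos_smul_mem_of_mem_nhds_zero {F : Type*} [AddCommGroup F] [Module ℝ F]
    [TopologicalSpace F] [ContinuousSMul ℝ F] (b : F) {W : Set F} (hW : W ∈ 𝓝 0) :
    ∃ ε : ℝ, 0 < ε ∧ ε • b ∈ W := by
  have hb : ∀ᶠ t : ℝ in 𝓝 0, t • b ∈ W :=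
    (continuous_id.smul continuous_const).tendsto' 0 0 (zero_smul ℝ b) hW
  obtain ⟨ε, hεb, hε⟩ := ((hb.filter_mono nhdsWithin_le_nhds).and
    (self_mem_nhdsWithin : Set.Ioi (0 : ℝ) ∈ 𝓝[>] 0)).exists
  exact ⟨ε, hε, hεb⟩

theorem tendsto_of_isLUB_image_abs_le {E F : Type*}
    [AddCommGroup E] [Lattice E] [CovariantClass E E (· + ·) (· ≤ ·)] [Module ℝ E]
    [TopologicalSpace E] [AddCommGroup F] [Lattice F] [CovariantClass F F (· + ·) (· ≤ ·)]
    [Module ℝ F] [PosSMulMono ℝ F] [TopologicalSpace F] [ContinuousSMul ℝ F]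
    (hE : LocallySolid E) (hF : LocallySolid F) {V : Set F} (hV : V ∈ 𝓝 0) {b : F}
    (hVb : ∀ v ∈ V, v ≤ b) {T : E →ₗ[ℝ] F} (hT : Continuous T) {p : E → F}
    (hp : ∀ u, 0 ≤ u → IsLUB (T '' {y | |y| ≤ u}) (p u)) :
    Tendsto (fun x => p |x|) (𝓝 0) (𝓝 0) := by
  rw [hF.tendsto_right_iff]
  rintro W ⟨hW, hWs⟩
  obtain ⟨ε, hε, hεb⟩ := exists_pos_smul_mem_of_mem_nhds_zero b hW
  have hTV : T ⁻¹' (ε • V) ∈ 𝓝 0 :=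
    hT.tendsto' 0 0 (map_zero T) ((set_smul_mem_nhds_zero_iff hε.ne').mpr hV)
  obtain ⟨U, ⟨hU, hUs⟩, hUV⟩ := hE.mem_iff.mp hTV
  filter_upwards [hU] with x hx
  have hpx : p |x| ≤ ε • b := (hp |x| (abs_nonneg x)).2 <| by
    rintro _ ⟨y, hy, rfl⟩
    obtain ⟨v, hv, hvy⟩ := hUV (hUs hy hx)
    rw [← hvy]
    exact smul_le_smul_of_nonneg_left (hVb v hv) hε.le
  have hp0 : 0 ≤ p |x| := (hp |x| (abs_nonneg x)).1 ⟨0, by simp, map_zero T⟩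
  refine hWs ?_ hεb
  rw [abs_of_nonneg hp0]
  exact hpx.trans (le_abs_self _)

theorem stmt5_general {E₁ E₂ : Type*}
    [AddCommGroup E₁] [Lattice E₁] [Module ℝ E₁]
    [CovariantClass E₁ E₁ (· + ·) (· ≤ ·)] [PosSMulMono ℝ E₁]
    [TopologicalSpace E₁] [IsTopologicalAddGroup E₁]
    [AddCommGroup E₂] [Lattice E₂] [Module ℝ E₂]
    [CovariantClass E₂ E₂ (· + ·) (· ≤ ·)] [PosSMulMono ℝ E₂]
    [TopologicalSpace E₂] [IsTopologicalAddGroup E₂] [ContinuousSMul ℝ E₂]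
    (hls₁ : LocallySolid E₁) (hls₂ : LocallySolid E₂)
    (hded : ∀ A : Set E₂, A.Nonempty → BddAbove A → ∃ s, IsLUB A s)
    (hV : ∃ V ∈ 𝓝 (0 : E₂), ∃ a b : E₂, V ⊆ Set.Icc a b)
    (S T : E₁ →ₗ[ℝ] E₂)
    (hTc : Continuous T)
    (aS aT : E₁ →ₗ[ℝ] E₂) (hmS : IsModulus S aS) (hmT : IsModulus T aT)
    (hle : opLe aS aT) :
    Continuous S := by
  obtain ⟨V, hV, _, b, hVb⟩ := hV
  have haT : Tendsto (fun x => aT |x|) (𝓝 0) (𝓝 0) :=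
    tendsto_of_isLUB_image_abs_le hls₁ hls₂ hV (fun v hv => (hVb hv).2) hTc
      (fun _ hu => hmT.isLUB_image_abs_le hded hu)
  refine continuous_of_tendsto_nhds_zero S
    (hls₂.tendsto_zero_of_abs_le haT (.of_forall fun x => ?_))
  calc |S x| ≤ aS |x| := hmS.abs_apply_le x
    _ ≤ aT |x| := hle _ (abs_nonneg x)
    _ ≤ |(aT |x|)| := le_abs_self _

/-- Generalized Nakano–Roberts theorem: if `E₁` is a locally solid Riesz space and `E₂`
is a Dedekind complete locally solid Riesz space with an order bounded neighborhood of
zero, then the topologically continuous operators form an ideal of the order bounded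
operators: if `S` is order bounded, `T` is topologically continuous and `|S| ≤ |T|`,
then `S` is topologically continuous. -/
theorem stmt5 {E₁ E₂ : Type*}
    [AddCommGroup E₁] [Lattice E₁] [Module ℝ E₁]
    [CovariantClass E₁ E₁ (· + ·) (· ≤ ·)] [PosSMulMono ℝ E₁]
    [TopologicalSpace E₁] [IsTopologicalAddGroup E₁] [ContinuousSMul ℝ E₁]
    [AddCommGroup E₂] [Lattice E₂] [Module ℝ E₂]
    [CovariantClass E₂ E₂ (· + ·) (· ≤ ·)] [PosSMulMono ℝ E₂]
    [TopologicalSpace E₂] [IsTopologicalAddGroup E₂] [ContinuousSMul ℝ E₂]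
    (hls₁ : LocallySolid E₁) (hls₂ : LocallySolid E₂)
    (hded : ∀ A : Set E₂, A.Nonempty → BddAbove A → ∃ s, IsLUB A s)
    (hV : ∃ V ∈ 𝓝 (0 : E₂), ∃ a b : E₂, V ⊆ Set.Icc a b)
    (S T : E₁ →ₗ[ℝ] E₂)
    (hSb : ∀ B : Set E₁, (∃ a b : E₁, B ⊆ Set.Icc a b) →
      ∃ a b : E₂, S '' B ⊆ Set.Icc a b)
    (hTc : Continuous T)
    (aS aT : E₁ →ₗ[ℝ] E₂) (hmS : IsModulus S aS) (hmT : IsModulus T aT)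
    (hle : opLe aS aT) :
    Continuous S :=
  stmt5_general hls₁ hls₂ hded hV S T hTc aS aT hmS hmT hle
end

section
/- Suppose (E₁, τ₁) is a separable locally solid Riesz space and (E₂, τ₂) is a super Dedekind complete locally solid Riesz space having an order bounded τ₂-neighborhood of zero. Then L_TC(E₁, E₂) is a super Dedekind complete Riesz space. -/
open Filter Topology Bornology Set

variable {E₁ E₂ : Type*}
  [AddCommGroup E₁] [Lattice E₁] [Module ℝ E₁]
  [TopologicalSpace E₁] [IsTopologicalAddGroup E₁] [ContinuousSMul ℝ E₁]
  [AddCommGroup E₂] [Lattice E₂] [Module ℝ E₂]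
  [TopologicalSpace E₂] [IsTopologicalAddGroup E₂] [ContinuousSMul ℝ E₂]

/-- The order on topologically continuous operators: `S ≤ T` iff `S x ≤ T x` for
all `x ≥ 0`. -/
def cOpLe (S T : E₁ →L[ℝ] E₂) : Prop := ∀ x : E₁, 0 ≤ x → S x ≤ T x

/-- `M` is the supremum of the family `𝒜` of topologically continuous operators. -/
def cIsSup (𝒜 : Set (E₁ →L[ℝ] E₂)) (M : E₁ →L[ℝ] E₂) : Prop :=
  (∀ T ∈ 𝒜, cOpLe T M) ∧ ∀ U : E₁ →L[ℝ] E₂, (∀ T ∈ 𝒜, cOpLe T U) → cOpLe M U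

open scoped Pointwise

/-!
Suprema of operators are computed pointwise on the positive cone and then extended: a map `p`
that is additive on the cone and tends to `0` along it extends, by `x ↦ p x⁺ - p x⁻`, to a
continuous additive, hence real-linear, operator. The supremum of `S` and `T` is `S + (T - S)⁺`,
where `(T - S)⁺ x = sup (T - S) '' [0, x]`: the order bounded neighbourhood of zero makes these
images order bounded, and additivity is the Riesz decomposition `[0, x + y] = [0, x] + [0, y]`.
A bounded family is replaced by the directed family of its finite suprema, whose pointwise
supremum is additive by directedness.

For the countable sup property, the countable sup property of `E₂` at the points `d⁺`, with `d`
running through a countable dense set, selects countably many of these finite suprema, hence a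
countable subfamily. Its supremum agrees with the given one at every such `d⁺`, hence on the whole
cone, because the order of `E₂` is closed: Dedekind completeness makes `E₂` Archimedean, so no
nonzero point lies in every neighbourhood of zero, and `E₂` is Hausdorff.
-/

/-- The preorder `cOpLe`; with it, `cIsSup 𝒜 M` unfolds to `IsLUB 𝒜 M`. -/
abbrev cOpPreorder : Preorder (E₁ →L[ℝ] E₂) where
  le := cOpLe
  le_refl _ _ _ := le_rfl
  le_trans _ _ _ h₁ h₂ x hx := (h₁ x hx).trans (h₂ x hx)

attribute [local instance] cOpPreorder

section LUBClosure

variable {α : Type*} [Preorder α]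

theorem Set.Finite.exists_isLUB (hpair : ∀ a b : α, ∃ c, IsLUB {a, b} c) {s : Set α}
    (hs : s.Finite) (hne : s.Nonempty) : ∃ c, IsLUB s c := by
  induction s, hs using Set.Finite.induction_on with
  | empty => exact absurd hne not_nonempty_empty
  | @insert a s _ _ ih =>
    rcases s.eq_empty_or_nonempty with rfl | hs
    · exact ⟨a, by simp⟩
    obtain ⟨b, hb⟩ := ih hs
    obtain ⟨c, hc⟩ := hpair a b
    refine ⟨c, (isLUB_congr ?_).1 hc⟩
    rw [upperBounds_insert, upperBounds_insert, upperBounds_singleton, hb.upperBounds_eq]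

def lubClosure (s : Set α) : Set α :=
  {c | ∃ t ⊆ s, t.Finite ∧ t.Nonempty ∧ IsLUB t c}

theorem subset_lubClosure {s : Set α} : s ⊆ lubClosure s :=
  fun a ha => ⟨{a}, singleton_subset_iff.2 ha, finite_singleton a, singleton_nonempty a,
    isLUB_singleton⟩

theorem upperBounds_lubClosure (s : Set α) : upperBounds (lubClosure s) = upperBounds s :=
  (upperBounds_mono_set subset_lubClosure).antisymm
    fun _ hb _ ⟨_, hts, _, _, ht⟩ => ht.2 (upperBounds_mono_set hts hb)

theorem directedOn_lubClosure (hpair : ∀ a b : α, ∃ c, IsLUB {a, b} c) (s : Set α) :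
    DirectedOn (· ≤ ·) (lubClosure s) := by
  rintro a ⟨t, hts, htf, htne, ha⟩ b ⟨u, hus, huf, -, hb⟩
  obtain ⟨c, hc⟩ := (htf.union huf).exists_isLUB hpair (htne.mono subset_union_left)
  exact ⟨c, ⟨t ∪ u, union_subset hts hus, htf.union huf, htne.mono subset_union_left, hc⟩,
    ha.mono hc subset_union_left, hb.mono hc subset_union_right⟩

theorem IsLUB.exists_countable_of_subset_lubClosure {s C : Set α} {a : α} (ha : IsLUB s a)
    (hC : C ⊆ lubClosure s) (hCc : C.Countable) (hCa : IsLUB C a) :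
    ∃ t ⊆ s, t.Countable ∧ IsLUB t a := by
  choose! u hus huf _ hu using
    fun c hc => (hC hc : ∃ t ⊆ s, t.Finite ∧ t.Nonempty ∧ IsLUB t c)
  refine ⟨⋃ c ∈ C, u c, iUnion₂_subset hus, hCc.biUnion fun c hc => (huf c hc).countable,
    fun x hx => ha.1 (iUnion₂_subset hus hx), fun b hb => hCa.2 fun c hc => (hu c hc).2 ?_⟩
  exact fun x hx => hb (mem_biUnion hc hx)

end LUBClosure

section LatticeOrderedGroup

variable {E : Type*} [AddCommGroup E] [Lattice E] [AddLeftMono E]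

theorem SolidSet.mem_of_mem_Icc {S : Set E} (hS : SolidSet S) {x y : E} (hy : y ∈ Icc 0 x)
    (hx : x ∈ S) : y ∈ S :=
  hS (by rw [abs_of_nonneg hy.1, abs_of_nonneg (hy.1.trans hy.2)]; exact hy.2) hx

theorem Icc_zero_add {x y : E} (hx : 0 ≤ x) (hy : 0 ≤ y) :
    Icc 0 (x + y) = Icc 0 x + Icc 0 y := by
  refine Subset.antisymm (fun z hz => ?_) (by simpa using Icc_add_Icc_subset 0 x 0 y)
  refine ⟨z ⊓ x, ⟨le_inf hz.1 hx, inf_le_right⟩, z - z ⊓ x, ⟨sub_nonneg.2 inf_le_left, ?_⟩,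
    add_sub_cancel _ _⟩
  rw [sub_inf, sub_self]
  exact sup_le hy (sub_le_iff_le_add'.2 hz.2)

theorem nonpos_of_forall_nsmul_le
    (hded : ∀ A : Set E, A.Nonempty → BddAbove A → ∃ s, IsLUB A s) {x b : E}
    (h : ∀ n : ℕ, n • x ≤ b) : x ≤ 0 := by
  obtain ⟨s, hs⟩ := hded (range fun n : ℕ => n • x) (range_nonempty _) ⟨b, forall_mem_range.2 h⟩
  have : s ≤ s - x := hs.2 <| forall_mem_range.2 fun n => le_sub_iff_add_le.2 <| by
    simpa [succ_nsmul] using hs.1 (mem_range_self (n + 1))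
  exact (le_sub_self_iff s).1 this

end LatticeOrderedGroup

namespace LocallySolid

variable {E : Type*} [AddCommGroup E] [Lattice E] [TopologicalSpace E]

theorem continuous_posPart [AddLeftMono E] [IsTopologicalAddGroup E] (h : LocallySolid E) :
    Continuous fun x : E => x⁺ := by
  refine continuous_iff_continuousAt.2 fun x => ?_
  have hsub : Tendsto (fun y => y - x) (𝓝 x) (𝓝 0) := by
    simpa using (tendsto_id (x := 𝓝 x)).sub_const x
  have : Tendsto (fun y : E => y⁺ - x⁺) (𝓝 x) (𝓝 0) := by
    refine h.tendsto_right_iff.2 fun N ⟨hN, hNs⟩ => ?_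
    filter_upwards [hsub hN] with y hy
    exact hNs (by simpa only [posPart_def] using abs_sup_sub_sup_le_abs y x 0) hy
  show Tendsto _ (𝓝 x) (𝓝 x⁺)
  simpa using this.add_const x⁺

theorem continuous_negPart [AddLeftMono E] [IsTopologicalAddGroup E] (h : LocallySolid E) :
    Continuous fun x : E => x⁻ := by
  simpa only [Function.comp_def, posPart_neg] using h.continuous_posPart.comp continuous_neg

theorem tendsto_zero_of_abs_le_s7 {α : Type*} {l : Filter α} {f g : α → E} (h : LocallySolid E)
    (hg : Tendsto g l (𝓝 0)) (hfg : ∀ᶠ a in l, |f a| ≤ |g a|) : Tendsto f l (𝓝 0) :=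
  h.tendsto_right_iff.2 fun _ ⟨hN, hNs⟩ => (hfg.and (hg hN)).mono fun _ ha => hNs ha.1 ha.2

theorem eventually_image_Icc_subset [AddLeftMono E] {F : Type*} [TopologicalSpace F] [Zero F]
    (h : LocallySolid E) {f : E → F} (hf : Tendsto f (𝓝 0) (𝓝 0)) {N : Set F} (hN : N ∈ 𝓝 0) :
    ∀ᶠ x in 𝓝 0, f '' Icc 0 x ⊆ N := by
  obtain ⟨S, ⟨hS, hSs⟩, hSN⟩ := h.mem_iff.1 (hf hN)
  filter_upwards [hS] with x hx
  exact image_subset_iff.2 fun y hy => hSN (hSs.mem_of_mem_Icc hy hx)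

theorem orderClosedTopology [AddLeftMono E] [IsTopologicalAddGroup E] [T1Space E]
    (h : LocallySolid E) : OrderClosedTopology E := by
  refine ⟨?_⟩
  have : {p : E × E | p.1 ≤ p.2} = (fun p : E × E => (p.1 - p.2)⁺) ⁻¹' {0} := by
    ext p
    simp [posPart_eq_zero]
  rw [this]
  exact isClosed_singleton.preimage (h.continuous_posPart.comp (continuous_fst.sub continuous_snd))

theorem exists_hasBasis_abs_le_smul [AddLeftMono E] [Module ℝ E] [ContinuousSMul ℝ E]
    [PosSMulMono ℝ E]
    (h : LocallySolid E) (hV : ∃ V ∈ 𝓝 (0 : E), ∃ a b : E, V ⊆ Icc a b) :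
    ∃ e : E, (𝓝 (0 : E)).HasBasis (fun μ : ℝ => 0 < μ) fun μ => {z | |z| ≤ μ • e} := by
  obtain ⟨V, hV, a, b, hVab⟩ := hV
  obtain ⟨S, ⟨hS, hSs⟩, hSV⟩ := h.mem_iff.1 hV
  have hSb : ∀ v ∈ S, |v| ≤ b := fun v hv => (hVab (hSV (hSs (abs_abs v).le hv))).2
  have hb : 0 ≤ b := (hVab (hSV (mem_of_mem_nhds hS))).2
  refine ⟨b, ⟨fun W => ⟨fun hW => ?_, fun ⟨μ, hμ, hμW⟩ => mem_of_superset ?_ hμW⟩⟩⟩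
  · obtain ⟨T, ⟨hT, hTs⟩, hTW⟩ := h.mem_iff.1 hW
    have hsmall : ∀ᶠ μ : ℝ in 𝓝[>] 0, μ • b ∈ T :=
      nhdsWithin_le_nhds ((continuous_id.smul continuous_const).tendsto' 0 0 (zero_smul ℝ b) hT)
    obtain ⟨μ, hμT, hμ⟩ := (hsmall.and self_mem_nhdsWithin).exists
    refine ⟨μ, hμ, fun z hz => hTW (hTs ?_ hμT)⟩
    rwa [abs_of_nonneg (smul_nonneg (le_of_lt hμ) hb)]
  · refine mem_of_superset ((set_smul_mem_nhds_zero_iff hμ.ne').2 hS) ?_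
    rintro _ ⟨v, hv, rfl⟩
    obtain ⟨hvb, hvb'⟩ := abs_le'.1 (hSb v hv)
    refine abs_le'.2 ⟨smul_le_smul_of_nonneg_left hvb hμ.le, ?_⟩
    rw [← smul_neg]
    exact smul_le_smul_of_nonneg_left hvb' hμ.le

end LocallySolid

section OrderBoundedNeighborhood

variable {E : Type*} [AddCommGroup E] [Lattice E] [AddLeftMono E] [TopologicalSpace E]
  [IsTopologicalAddGroup E]

theorem eq_zero_of_forall_mem_nhds_zero
    (hded : ∀ A : Set E, A.Nonempty → BddAbove A → ∃ s, IsLUB A s)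
    (hV : ∃ V ∈ 𝓝 (0 : E), ∃ a b : E, V ⊆ Icc a b) {x : E} (hx : ∀ U ∈ 𝓝 (0 : E), x ∈ U) :
    x = 0 := by
  obtain ⟨V, hV, a, b, hVab⟩ := hV
  have hnonpos : ∀ y : E, (∀ U ∈ 𝓝 (0 : E), y ∈ U) → y ≤ 0 := fun y hy =>
    nonpos_of_forall_nsmul_le hded fun n =>
      (hVab (hy ((n • ·) ⁻¹' V) ((continuous_nsmul n).tendsto' 0 0 (nsmul_zero n) hV))).2
  exact le_antisymm (hnonpos x hx) <| neg_nonpos.1 <| hnonpos (-x) fun U hU =>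
    hx (Neg.neg ⁻¹' U) (continuous_neg.tendsto' 0 0 neg_zero hU)

theorem t2Space_of_nhds_zero_subset_Icc
    (hded : ∀ A : Set E, A.Nonempty → BddAbove A → ∃ s, IsLUB A s)
    (hV : ∃ V ∈ 𝓝 (0 : E), ∃ a b : E, V ⊆ Icc a b) : T2Space E :=
  IsTopologicalAddGroup.t2Space_of_zero_sep fun _ hx => by
    by_contra! h
    exact hx (eq_zero_of_forall_mem_nhds_zero hded hV h)

end OrderBoundedNeighborhood

section ConeExtension

variable {E F : Type*} [AddCommGroup E] [Lattice E] [AddLeftMono E] [AddCommGroup F]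

def AddMonoidHom.ofCone (p : E → F) (hadd : ∀ x y, 0 ≤ x → 0 ≤ y → p (x + y) = p x + p y) :
    E →+ F where
  toFun x := p x⁺ - p x⁻
  map_zero' := by simp
  map_add' x y := by
    have hpos : ∀ a : E, a⁺ = a + a⁻ := fun a => eq_add_of_sub_eq (posPart_sub_negPart a)
    have key : (x + y)⁺ + (x⁻ + y⁻) = (x + y)⁻ + (x⁺ + y⁺) := by
      rw [hpos (x + y), hpos x, hpos y]; abel
    have := congrArg p key
    rw [hadd _ _ (posPart_nonneg _) (add_nonneg (negPart_nonneg _) (negPart_nonneg _)),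
      hadd _ _ (negPart_nonneg _) (add_nonneg (posPart_nonneg _) (posPart_nonneg _)),
      hadd _ _ (negPart_nonneg _) (negPart_nonneg _),
      hadd _ _ (posPart_nonneg _) (posPart_nonneg _)] at this
    rw [← sub_eq_zero] at this ⊢
    rw [← this]
    abel

@[simp]
theorem AddMonoidHom.ofCone_apply (p : E → F)
    (hadd : ∀ x y, 0 ≤ x → 0 ≤ y → p (x + y) = p x + p y) (x : E) :
    AddMonoidHom.ofCone p hadd x = p x⁺ - p x⁻ :=
  rfl

theorem AddMonoidHom.ofCone_apply_of_nonneg {p : E → F}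
    {hadd : ∀ x y, 0 ≤ x → 0 ≤ y → p (x + y) = p x + p y} {x : E} (hx : 0 ≤ x) :
    AddMonoidHom.ofCone p hadd x = p x := by
  have hp0 : p 0 = 0 := by simpa using hadd 0 0 le_rfl le_rfl
  simp [posPart_eq_self.2 hx, negPart_eq_zero.2 hx, hp0]

theorem LocallySolid.exists_continuousLinearMap_eq_of_nonneg [Module ℝ E] [TopologicalSpace E]
    [IsTopologicalAddGroup E] [ContinuousSMul ℝ E] [Module ℝ F] [TopologicalSpace F]
    [IsTopologicalAddGroup F] [ContinuousSMul ℝ F] [T2Space F]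
    (hE : LocallySolid E) (p : E → F)
    (hadd : ∀ x y, 0 ≤ x → 0 ≤ y → p (x + y) = p x + p y) (hp : Tendsto p (𝓝[≥] 0) (𝓝 0)) :
    ∃ P : E →L[ℝ] F, ∀ x, 0 ≤ x → P x = p x := by
  have hcone : ∀ {f : E → E}, Continuous f → f 0 = 0 → (∀ x, 0 ≤ f x) →
      Tendsto (p ∘ f) (𝓝 0) (𝓝 0) := fun hf hf0 hfpos =>
    hp.comp (tendsto_nhdsWithin_iff.2 ⟨hf.tendsto' 0 0 hf0, .of_forall hfpos⟩)
  let f := AddMonoidHom.ofCone p hadd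
  have hf : Continuous f := continuous_of_continuousAt_zero f <| by
    rw [ContinuousAt, map_zero]
    show Tendsto (fun x => p x⁺ - p x⁻) _ _
    simpa using
      (hcone hE.continuous_posPart posPart_zero posPart_nonneg).sub
        (hcone hE.continuous_negPart negPart_zero negPart_nonneg)
  exact ⟨f.toRealLinearMap hf, fun x hx => AddMonoidHom.ofCone_apply_of_nonneg (hadd := hadd) hx⟩

end ConeExtension

section Operators

variable {E F : Type*} [AddCommGroup E] [Lattice E] [Module ℝ E] [TopologicalSpace E]
  [AddCommGroup F] [Lattice F] [Module ℝ F] [TopologicalSpace F]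

theorem isLUB_of_forall_isLUB_image_apply {𝒮 : Set (E →L[ℝ] F)} {G : E →L[ℝ] F}
    (h : ∀ x, 0 ≤ x → IsLUB ((fun T : E →L[ℝ] F => T x) '' 𝒮) (G x)) : IsLUB 𝒮 G :=
  ⟨fun _ hT x hx => (h x hx).1 (mem_image_of_mem _ hT),
    fun _ hU x hx => (h x hx).2 (forall_mem_image.2 fun _ hT => hU hT x hx)⟩

theorem bddAbove_image_Icc [AddLeftMono E] [PosSMulMono ℝ E] [ContinuousSMul ℝ E]
    [PosSMulMono ℝ F] (hE : LocallySolid E) (T : E →L[ℝ] F) {N : Set F}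
    (hN : N ∈ 𝓝 0) (hNb : BddAbove N) (x : E) : BddAbove (T '' Icc 0 x) := by
  obtain ⟨c, hc⟩ := hNb
  have hsmall : ∀ᶠ t : ℝ in 𝓝[>] 0, T '' Icc 0 (t • x) ⊆ N :=
    nhdsWithin_le_nhds ((continuous_id.smul continuous_const).tendsto' 0 0 (zero_smul ℝ x)
      (hE.eventually_image_Icc_subset (T.continuous.tendsto' 0 0 (map_zero T)) hN))
  obtain ⟨t, ht, htpos⟩ := (hsmall.and self_mem_nhdsWithin).exists
  refine ⟨t⁻¹ • c, forall_mem_image.2 fun y hy => ?_⟩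
  have : T (t • y) ∈ N := ht (mem_image_of_mem T
    ⟨smul_nonneg htpos.le hy.1, smul_le_smul_of_nonneg_left hy.2 htpos.le⟩)
  rw [map_smul] at this
  exact (le_inv_smul_iff_of_pos htpos).2 (hc this)

theorem exists_continuousLinearMap_isLUB_image_Icc [AddLeftMono E] [PosSMulMono ℝ E]
    [IsTopologicalAddGroup E] [ContinuousSMul ℝ E] [AddLeftMono F] [PosSMulMono ℝ F]
    [IsTopologicalAddGroup F] [ContinuousSMul ℝ F] [T2Space F] (hE : LocallySolid E)
    (hded : ∀ A : Set F, A.Nonempty → BddAbove A → ∃ s, IsLUB A s) {e : F}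
    (he : (𝓝 (0 : F)).HasBasis (fun μ : ℝ => 0 < μ) fun μ => {z | |z| ≤ μ • e})
    (T : E →L[ℝ] F) : ∃ P : E →L[ℝ] F, ∀ x, 0 ≤ x → IsLUB (T '' Icc 0 x) (P x) := by
  have hsmall : ∀ μ : ℝ, 0 < μ → ∀ᶠ x in 𝓝 0, T '' Icc 0 x ⊆ {z | |z| ≤ μ • e} := fun μ hμ =>
    hE.eventually_image_Icc_subset (T.continuous.tendsto' 0 0 (map_zero T)) (he.mem_of_mem hμ)
  choose! p hp using fun x (hx : 0 ≤ x) => hded _ ⟨T 0, mem_image_of_mem T (left_mem_Icc.2 hx)⟩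
    (bddAbove_image_Icc hE T (he.mem_of_mem one_pos)
      ⟨1 • e, fun z hz => (le_abs_self z).trans hz⟩ x)
  have hp0 : ∀ x, 0 ≤ x → 0 ≤ p x := fun x hx => by
    simpa using (hp x hx).1 (mem_image_of_mem T (left_mem_Icc.2 hx))
  have hadd : ∀ x y, 0 ≤ x → 0 ≤ y → p (x + y) = p x + p y := fun x y hx hy =>
    (hp _ (add_nonneg hx hy)).unique <| by
      rw [Icc_zero_add hx hy, image_add]
      exact (hp x hx).add (hp y hy)
  have hlim : Tendsto p (𝓝[≥] 0) (𝓝 0) := he.tendsto_right_iff.2 fun μ hμ => by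
    filter_upwards [nhdsWithin_le_nhds (hsmall μ hμ), self_mem_nhdsWithin] with x hx hx0
    rw [abs_of_nonneg (hp0 x hx0)]
    exact (hp x hx0).2 fun z hz => (le_abs_self z).trans (hx hz)
  obtain ⟨P, hP⟩ := hE.exists_continuousLinearMap_eq_of_nonneg p hadd hlim
  exact ⟨P, fun x hx => hP x hx ▸ hp x hx⟩

theorem isLUB_pair_add_of_isLUB_image_Icc_sub [AddLeftMono E] [AddLeftMono F]
    [IsTopologicalAddGroup F] {S T P : E →L[ℝ] F}
    (hP : ∀ x, 0 ≤ x → IsLUB ((T - S) '' Icc 0 x) (P x)) : IsLUB {S, T} (S + P) := by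
  refine ⟨?_, fun U hU x hx => ?_⟩
  · rintro _ (rfl | rfl) x hx
    · simpa using (hP x hx).1 (mem_image_of_mem _ (left_mem_Icc.2 hx))
    · simpa [sub_le_iff_le_add, add_comm] using
        (hP x hx).1 (mem_image_of_mem _ (right_mem_Icc.2 hx))
  · have hS : S ≤ U := hU (mem_insert S {T})
    have hT : T ≤ U := hU (mem_insert_of_mem S rfl)
    have : P x ≤ U x - S x := (hP x hx).2 <| forall_mem_image.2 fun y hy => by
      have hSU : S x - S y ≤ U x - U y := by simpa using hS (x - y) (sub_nonneg.2 hy.2)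
      calc (T - S) y = T y - S y := rfl
        _ ≤ U y - S y := sub_le_sub_right (hT y hy.1) _
        _ ≤ U x - S x := by
          rw [sub_le_sub_iff, add_comm]
          exact sub_le_sub_iff.1 hSU
    simpa [le_sub_iff_add_le'] using this

theorem upperBounds_image_apply_add [AddLeftMono F] {𝒮 : Set (E →L[ℝ] F)}
    (hdir : DirectedOn (· ≤ ·) 𝒮) {x y : E} (hx : 0 ≤ x) (hy : 0 ≤ y) :
    upperBounds ((fun T : E →L[ℝ] F => T (x + y)) '' 𝒮) =
      upperBounds ((fun T : E →L[ℝ] F => T x) '' 𝒮 + (fun T : E →L[ℝ] F => T y) '' 𝒮) := by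
  ext c
  refine ⟨?_, fun hc => forall_mem_image.2 fun T hT =>
    map_add T x y ▸ hc (add_mem_add (mem_image_of_mem _ hT) (mem_image_of_mem _ hT))⟩
  rintro hc _ ⟨_, ⟨A, hA, rfl⟩, _, ⟨B, hB, rfl⟩, rfl⟩
  obtain ⟨C, hC, hAC, hBC⟩ := hdir A hA B hB
  exact (add_le_add (hAC x hx) (hBC y hy)).trans (map_add C x y ▸ hc (mem_image_of_mem _ hC))

theorem exists_continuousLinearMap_isLUB_image_apply [AddLeftMono E] [IsTopologicalAddGroup E]
    [ContinuousSMul ℝ E] [AddLeftMono F] [IsTopologicalAddGroup F] [ContinuousSMul ℝ F]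
    [T2Space F] (hE : LocallySolid E) (hF : LocallySolid F)
    (hded : ∀ A : Set F, A.Nonempty → BddAbove A → ∃ s, IsLUB A s) {𝒮 : Set (E →L[ℝ] F)}
    (hne : 𝒮.Nonempty) (hdir : DirectedOn (· ≤ ·) 𝒮) (hbdd : BddAbove 𝒮) :
    ∃ G : E →L[ℝ] F, ∀ x, 0 ≤ x → IsLUB ((fun T : E →L[ℝ] F => T x) '' 𝒮) (G x) := by
  obtain ⟨T₀, hT₀⟩ := hne
  obtain ⟨M, hM⟩ := hbdd
  choose! q hq using fun x (hx : 0 ≤ x) =>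
    hded ((fun T : E →L[ℝ] F => T x) '' 𝒮) ⟨T₀ x, mem_image_of_mem _ hT₀⟩
    ⟨M x, forall_mem_image.2 fun T hT => hM hT x hx⟩
  have hadd : ∀ x y, 0 ≤ x → 0 ≤ y → q (x + y) = q x + q y := fun x y hx hy =>
    (hq _ (add_nonneg hx hy)).unique
      ((isLUB_congr (upperBounds_image_apply_add hdir hx hy)).2 ((hq x hx).add (hq y hy)))
  have hlim : Tendsto q (𝓝[≥] 0) (𝓝 0) := by
    have hsqueeze : Tendsto (fun x => q x - T₀ x) (𝓝[≥] 0) (𝓝 0) :=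
      hF.tendsto_zero_of_abs_le_s7 (g := M - T₀)
        (((M - T₀).continuous.tendsto' 0 0 (map_zero _)).mono_left nhdsWithin_le_nhds) <|
        eventually_nhdsWithin_of_forall fun x hx => by
          have hq₀ : 0 ≤ q x - T₀ x := sub_nonneg.2 ((hq x hx).1 (mem_image_of_mem _ hT₀))
          rw [abs_of_nonneg hq₀]
          exact (sub_le_sub_right ((hq x hx).2 (forall_mem_image.2 fun T hT => hM hT x hx)) _).trans
            (le_abs_self _)
    simpa using
      hsqueeze.add ((T₀.continuous.tendsto' 0 0 (map_zero _)).mono_left nhdsWithin_le_nhds)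
  obtain ⟨G, hG⟩ := hE.exists_continuousLinearMap_eq_of_nonneg q hadd hlim
  exact ⟨G, fun x hx => hG x hx ▸ hq x hx⟩

theorem isLUB_image_apply_of_directedOn [AddLeftMono E] [IsTopologicalAddGroup E]
    [ContinuousSMul ℝ E] [AddLeftMono F] [IsTopologicalAddGroup F] [ContinuousSMul ℝ F]
    [T2Space F] (hE : LocallySolid E) (hF : LocallySolid F)
    (hded : ∀ A : Set F, A.Nonempty → BddAbove A → ∃ s, IsLUB A s) {𝒮 : Set (E →L[ℝ] F)}
    (hne : 𝒮.Nonempty) (hdir : DirectedOn (· ≤ ·) 𝒮) {M : E →L[ℝ] F} (hM : IsLUB 𝒮 M)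
    {x : E} (hx : 0 ≤ x) : IsLUB ((fun T : E →L[ℝ] F => T x) '' 𝒮) (M x) := by
  obtain ⟨G, hG⟩ := exists_continuousLinearMap_isLUB_image_apply hE hF hded hne hdir ⟨M, hM.1⟩
  have hG' := isLUB_of_forall_isLUB_image_apply hG
  rw [← le_antisymm (hG'.mono hM subset_rfl x hx) (hM.mono hG' subset_rfl x hx)]
  exact hG x hx

theorem le_of_forall_posPart_le_of_dense [AddLeftMono E] [IsTopologicalAddGroup E]
    [AddLeftMono F] [IsTopologicalAddGroup F] [T1Space F] (hE : LocallySolid E)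
    (hF : LocallySolid F) {S T : E →L[ℝ] F} {D : Set E} (hD : Dense D)
    (h : ∀ d ∈ D, S d⁺ ≤ T d⁺) : S ≤ T := by
  have := hF.orderClosedTopology
  intro x hx
  have key : S x⁺ ≤ T x⁺ := hD.induction (P := fun x => S x⁺ ≤ T x⁺) h
    (isClosed_le (S.continuous.comp hE.continuous_posPart)
      (T.continuous.comp hE.continuous_posPart)) x
  rwa [posPart_eq_self.2 hx] at key

theorem exists_countable_isLUB_of_directedOn [AddLeftMono E] [IsTopologicalAddGroup E]
    [ContinuousSMul ℝ E] [TopologicalSpace.SeparableSpace E] [AddLeftMono F]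
    [IsTopologicalAddGroup F] [ContinuousSMul ℝ F] [T2Space F] (hE : LocallySolid E)
    (hF : LocallySolid F) (hded : ∀ A : Set F, A.Nonempty → BddAbove A → ∃ s, IsLUB A s)
    (hcsp : ∀ (A : Set F) (s : F), IsLUB A s → ∃ C ⊆ A, C.Countable ∧ IsLUB C s)
    {𝒮 : Set (E →L[ℝ] F)} (hdir : DirectedOn (· ≤ ·) 𝒮) {M : E →L[ℝ] F} (hM : IsLUB 𝒮 M) :
    ∃ 𝒞 ⊆ 𝒮, 𝒞.Countable ∧ IsLUB 𝒞 M := by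
  rcases 𝒮.eq_empty_or_nonempty with rfl | hne
  · exact ⟨∅, subset_rfl, countable_empty, hM⟩
  have hsel : ∀ d : E, ∃ 𝒞 ⊆ 𝒮, 𝒞.Countable ∧
      IsLUB ((fun T : E →L[ℝ] F => T d⁺) '' 𝒞) (M d⁺) := fun d => by
    obtain ⟨C, hCS, hCc, hC⟩ :=
      hcsp _ _ (isLUB_image_apply_of_directedOn hE hF hded hne hdir hM (posPart_nonneg d))
    obtain ⟨𝒞, h𝒞S, h𝒞⟩ := SurjOn.exists_bijOn_subset hCS
    exact ⟨𝒞, h𝒞S, countable_of_injective_of_countable_image h𝒞.injOn (h𝒞.image_eq ▸ hCc),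
      h𝒞.image_eq ▸ hC⟩
  choose 𝒞 h𝒞S h𝒞c h𝒞 using hsel
  obtain ⟨D, hDc, hD⟩ := TopologicalSpace.exists_countable_dense E
  refine ⟨⋃ d ∈ D, 𝒞 d, iUnion₂_subset fun d _ => h𝒞S d, hDc.biUnion fun d _ => h𝒞c d,
    fun T hT => hM.1 (iUnion₂_subset (fun d _ => h𝒞S d) hT), fun U hU => ?_⟩
  exact le_of_forall_posPart_le_of_dense hE hF hD fun d hd =>
    (h𝒞 d).2 (forall_mem_image.2 fun T hT => hU (mem_biUnion hd hT) d⁺ (posPart_nonneg d))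

end Operators

/-- If `E₁` is a separable locally solid Riesz space and `E₂` is a super Dedekind complete
locally solid Riesz space with an order bounded neighborhood of zero, then the space of
topologically continuous operators is a super Dedekind complete Riesz space: binary
suprema exist, every nonempty order bounded family has a supremum, and every family with
a supremum admits a countable subfamily with the same supremum. -/
theorem stmt7
    [CovariantClass E₁ E₁ (· + ·) (· ≤ ·)] [PosSMulMono ℝ E₁]
    [CovariantClass E₂ E₂ (· + ·) (· ≤ ·)] [PosSMulMono ℝ E₂]
    [TopologicalSpace.SeparableSpace E₁]
    (hls₁ : LocallySolid E₁) (hls₂ : LocallySolid E₂)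
    (hded : ∀ A : Set E₂, A.Nonempty → BddAbove A → ∃ s, IsLUB A s)
    (hcsp : ∀ (A : Set E₂) (s : E₂), IsLUB A s →
      ∃ C ⊆ A, C.Countable ∧ IsLUB C s)
    (hV : ∃ V ∈ 𝓝 (0 : E₂), ∃ a b : E₂, V ⊆ Set.Icc a b) :
    (∀ S T : E₁ →L[ℝ] E₂, ∃ J : E₁ →L[ℝ] E₂, cIsSup {S, T} J) ∧
    (∀ 𝒜 : Set (E₁ →L[ℝ] E₂), 𝒜.Nonempty →
      (∃ U : E₁ →L[ℝ] E₂, ∀ T ∈ 𝒜, cOpLe T U) →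
      ∃ M : E₁ →L[ℝ] E₂, cIsSup 𝒜 M) ∧
    (∀ (𝒜 : Set (E₁ →L[ℝ] E₂)) (M : E₁ →L[ℝ] E₂), cIsSup 𝒜 M →
      ∃ C ⊆ 𝒜, C.Countable ∧ cIsSup C M) := by
  have : T2Space E₂ := t2Space_of_nhds_zero_subset_Icc hded hV
  obtain ⟨e, he⟩ := hls₂.exists_hasBasis_abs_le_smul hV
  have hpair : ∀ S T : E₁ →L[ℝ] E₂, ∃ J, IsLUB {S, T} J := fun S T =>
    have ⟨P, hP⟩ := exists_continuousLinearMap_isLUB_image_Icc hls₁ hded he (T - S)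
    ⟨S + P, isLUB_pair_add_of_isLUB_image_Icc_sub hP⟩
  refine ⟨hpair, fun 𝒜 hne hbdd => ?_, fun 𝒜 M hM => ?_⟩
  · obtain ⟨G, hG⟩ := exists_continuousLinearMap_isLUB_image_apply hls₁ hls₂ hded
      (hne.mono subset_lubClosure) (directedOn_lubClosure hpair 𝒜)
      (by rwa [BddAbove, upperBounds_lubClosure])
    exact ⟨G, (isLUB_congr (upperBounds_lubClosure 𝒜)).1 (isLUB_of_forall_isLUB_image_apply hG)⟩
  · obtain ⟨𝒞, h𝒞, h𝒞c, h𝒞M⟩ := exists_countable_isLUB_of_directedOn hls₁ hls₂ hded hcsp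
      (directedOn_lubClosure hpair 𝒜) ((isLUB_congr (upperBounds_lubClosure 𝒜)).2 hM)
    exact IsLUB.exists_countable_of_subset_lubClosure hM h𝒞 h𝒞c h𝒞M
end

section
/- Let (E₁, τ₁) and (E₂, τ₂) be locally solid Riesz spaces, each possessing an order bounded neighborhood of zero. Then a linear operator T : E₁ → E₂ is order bounded if and only if it is topologically bounded; that is, L_B(E₁, E₂) = L_TB(E₁, E₂). -/
open Filter Topology Bornology Set

/-! Under these hypotheses the order bounded and the von Neumann bounded subsets of each space
coincide, so both kinds of bounded operators are the maps sending bounded sets to bounded sets.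
A solid zero-neighbourhood `S` absorbs `{x | |x| ≤ u}` because `|r • x| ≤ |r| • u` and
`|r| • u ∈ S` for small `r`; conversely a von Neumann bounded set lies in a multiple `c • V` of an
order bounded zero-neighbourhood `V ⊆ [a, b]`, hence in `[-w, w]` with `w = |c| • (|a| ⊔ |b|)`. -/

section OrderedModule

variable {E : Type*} [AddCommGroup E] [Lattice E]

lemma abs_smul_le_abs_smul_abs [Module ℝ E] [PosSMulMono ℝ E] (r : ℝ) (x : E) :
    |r • x| ≤ |r| • |x| := by
  have key : ∀ s : ℝ, 0 ≤ s → |s • x| ≤ s • |x| := fun s hs =>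
    abs_le'.2 ⟨smul_le_smul_of_nonneg_left (le_abs_self x) hs, by
      rw [← smul_neg]; exact smul_le_smul_of_nonneg_left (neg_le_abs x) hs⟩
  rcases le_total 0 r with hr | hr
  · rw [abs_of_nonneg hr]; exact key r hr
  · rw [← neg_neg r, neg_smul, abs_neg, abs_neg, abs_of_nonneg (neg_nonneg.2 hr)]
    exact key (-r) (neg_nonneg.2 hr)

variable [CovariantClass E E (· + ·) (· ≤ ·)]

lemma abs_le_sup_abs_of_mem_Icc {a b x : E} (hx : x ∈ Icc a b) : |x| ≤ |a| ⊔ |b| :=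
  abs_le'.2 ⟨hx.2.trans ((le_abs_self b).trans le_sup_right),
    (neg_le_neg_iff.mpr hx.1).trans ((neg_le_abs a).trans le_sup_left)⟩

variable [Module ℝ E] [PosSMulMono ℝ E] [TopologicalSpace E]

lemma isVonNBounded_setOf_abs_le [ContinuousSMul ℝ E]
    (hls : LocallySolid E) (u : E) : IsVonNBounded ℝ {x : E | |x| ≤ u} := by
  intro V hV
  obtain ⟨S, ⟨hS, hS_solid⟩, hSV⟩ := hls.mem_iff.mp hV
  refine Absorbs.mono_left ?_ hSV
  have hlim : Tendsto (fun r : ℝ => |r| • u) (𝓝 0) (𝓝 0) :=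
    (continuous_abs.smul continuous_const : Continuous fun r : ℝ => |r| • u).tendsto' 0 0 (by simp)
  rw [id, absorbs_iff_eventually_nhds_zero (mem_of_mem_nhds hS)]
  filter_upwards [hlim.eventually_mem hS] with r hr x (hx : |x| ≤ u)
  refine hS_solid ?_ hr
  calc |r • x| ≤ |r| • |x| := abs_smul_le_abs_smul_abs r x
    _ ≤ |r| • u := smul_le_smul_of_nonneg_left hx (abs_nonneg r)
    _ = |(|r| • u)| := (abs_of_nonneg (smul_nonneg (abs_nonneg r) ((abs_nonneg x).trans hx))).symm

lemma isVonNBounded_of_subset_Icc [ContinuousSMul ℝ E]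
    (hls : LocallySolid E) {B : Set E} {a b : E} (hB : B ⊆ Icc a b) : IsVonNBounded ℝ B :=
  (isVonNBounded_setOf_abs_le hls (|a| ⊔ |b|)).subset
    fun _ hx => abs_le_sup_abs_of_mem_Icc (hB hx)

lemma exists_subset_Icc_of_isVonNBounded
    (hV : ∃ V ∈ 𝓝 (0 : E), ∃ a b : E, V ⊆ Icc a b) {B : Set E} (hB : IsVonNBounded ℝ B) :
    ∃ a b : E, B ⊆ Icc a b := by
  obtain ⟨V, hV0, a, b, hVab⟩ := hV
  obtain ⟨c, hc⟩ := (hB hV0).exists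
  refine ⟨-(|c| • (|a| ⊔ |b|)), |c| • (|a| ⊔ |b|), fun x hx => ?_⟩
  obtain ⟨v, hv, rfl⟩ := hc hx
  have hxu : |c • v| ≤ |c| • (|a| ⊔ |b|) := calc
    |c • v| ≤ |c| • |v| := abs_smul_le_abs_smul_abs c v
    _ ≤ |c| • (|a| ⊔ |b|) :=
      smul_le_smul_of_nonneg_left (abs_le_sup_abs_of_mem_Icc (hVab hv)) (abs_nonneg c)
  exact ⟨neg_le.mp ((neg_le_abs _).trans hxu), (le_abs_self _).trans hxu⟩

end OrderedModule

theorem stmt11_general {E₁ E₂ : Type*}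
    [AddCommGroup E₁] [Lattice E₁] [Module ℝ E₁]
    [CovariantClass E₁ E₁ (· + ·) (· ≤ ·)] [PosSMulMono ℝ E₁]
    [TopologicalSpace E₁] [ContinuousSMul ℝ E₁]
    [AddCommGroup E₂] [Lattice E₂] [Module ℝ E₂]
    [CovariantClass E₂ E₂ (· + ·) (· ≤ ·)] [PosSMulMono ℝ E₂]
    [TopologicalSpace E₂] [ContinuousSMul ℝ E₂]
    (hls₁ : LocallySolid E₁) (hls₂ : LocallySolid E₂)
    (hV₁ : ∃ V ∈ 𝓝 (0 : E₁), ∃ a b : E₁, V ⊆ Set.Icc a b)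
    (hV₂ : ∃ V ∈ 𝓝 (0 : E₂), ∃ a b : E₂, V ⊆ Set.Icc a b)
    (T : E₁ →ₗ[ℝ] E₂) :
    (∀ B : Set E₁, (∃ a b : E₁, B ⊆ Set.Icc a b) →
        ∃ a b : E₂, T '' B ⊆ Set.Icc a b) ↔
    (∀ B : Set E₁, Bornology.IsVonNBounded ℝ B →
        Bornology.IsVonNBounded ℝ (T '' B)) := by
  constructor
  · intro hT B hB
    obtain ⟨a, b, hTB⟩ := hT B (exists_subset_Icc_of_isVonNBounded hV₁ hB)
    exact isVonNBounded_of_subset_Icc hls₂ hTB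
  · rintro hT B ⟨a, b, hB⟩
    exact exists_subset_Icc_of_isVonNBounded hV₂ (hT B (isVonNBounded_of_subset_Icc hls₁ hB))

/-- If `E₁` and `E₂` are locally solid Riesz spaces each possessing an order bounded
neighborhood of zero, then a linear operator `T : E₁ → E₂` is order bounded iff it is
topologically bounded. -/
theorem stmt11 {E₁ E₂ : Type*}
    [AddCommGroup E₁] [Lattice E₁] [Module ℝ E₁]
    [CovariantClass E₁ E₁ (· + ·) (· ≤ ·)] [PosSMulMono ℝ E₁]
    [TopologicalSpace E₁] [IsTopologicalAddGroup E₁] [ContinuousSMul ℝ E₁]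
    [AddCommGroup E₂] [Lattice E₂] [Module ℝ E₂]
    [CovariantClass E₂ E₂ (· + ·) (· ≤ ·)] [PosSMulMono ℝ E₂]
    [TopologicalSpace E₂] [IsTopologicalAddGroup E₂] [ContinuousSMul ℝ E₂]
    (hls₁ : LocallySolid E₁) (hls₂ : LocallySolid E₂)
    (hV₁ : ∃ V ∈ 𝓝 (0 : E₁), ∃ a b : E₁, V ⊆ Set.Icc a b)
    (hV₂ : ∃ V ∈ 𝓝 (0 : E₂), ∃ a b : E₂, V ⊆ Set.Icc a b)
    (T : E₁ →ₗ[ℝ] E₂) :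
    (∀ B : Set E₁, (∃ a b : E₁, B ⊆ Set.Icc a b) →
        ∃ a b : E₂, T '' B ⊆ Set.Icc a b) ↔
    (∀ B : Set E₁, Bornology.IsVonNBounded ℝ B →
        Bornology.IsVonNBounded ℝ (T '' B)) :=
  stmt11_general hls₁ hls₂ hV₁ hV₂ T
end

section
/- Let (E, τ) be a barrelled locally convex-solid Riesz space. Then the topological dual E' is a band in the order dual E~: if 0 ≤ f_α ↑ f in E~ with each f_α continuous, then f is continuous; the key step is that the set V = {x ∈ E : |f_α(x)| ≤ 1 for all α} is an absorbing, balanced, convex, closed set (a barrel), hence a neighborhood of zero. -/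
open Filter Topology Set

/-!
The closed unit ball of a lower semicontinuous seminorm is a barrel, so the hypothesis makes `E`
barrelled in Mathlib's sense, and the supremum `q` of the pointwise bounded family of continuous
seminorms `|f α|` is continuous (`|f α x| ≤ F |x|`). Its unit ball is the paper's barrel
`V = {x | ∀ α, |f α x| ≤ 1}`, a neighbourhood of `0` on whose positive part `F = sup f α ≤ 1`.
A solid neighbourhood `S ⊆ V` then gives `|F x| ≤ F |x| ≤ 1` on `S`, so `F` is continuous.
-/

lemma BarrelledSpace.of_barrel_mem_nhds {E : Type*} [AddCommGroup E] [Module ℝ E]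
    [TopologicalSpace E] [IsTopologicalAddGroup E] [ContinuousConstSMul ℝ E]
    (h : ∀ S : Set E, IsClosed S → Convex ℝ S → Balanced ℝ S → Absorbent ℝ S → S ∈ 𝓝 0) :
    BarrelledSpace ℝ E where
  continuous_of_lowerSemicontinuous p hp := by
    refine Seminorm.continuous' (r := 1) (h _ ?_ (p.convex_closedBall 0 1)
      (p.balanced_closedBall_zero 1) (p.absorbent_closedBall_zero one_pos))
    rw [Seminorm.closedBall_zero_eq]
    exact hp.isClosed_preimage 1

lemma abs_map_le_map_abs {E β F : Type*} [Lattice E] [AddGroup E] [AddLeftMono E]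
    [AddCommGroup β] [LinearOrder β] [IsOrderedAddMonoid β] [FunLike F E β]
    [AddMonoidHomClass F E β] {f : F} (hf : Monotone f) (x : E) : |f x| ≤ f |x| :=
  abs_le.2 ⟨neg_le.1 (by simpa using hf (neg_le_abs x)), hf (le_abs_self x)⟩

lemma LinearMap.continuous_of_abs_le_one {E : Type*} [AddCommGroup E] [Module ℝ E]
    [TopologicalSpace E] [IsTopologicalAddGroup E] [ContinuousConstSMul ℝ E] (F : E →ₗ[ℝ] ℝ)
    {S : Set E} (hS : S ∈ 𝓝 0) (hF : ∀ x ∈ S, |F x| ≤ 1) : Continuous F := by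
  have hp : Continuous ((normSeminorm ℝ ℝ).comp F) :=
    Seminorm.continuous' (r := 1) (mem_of_superset hS fun x hx => by simpa using hF x hx)
  refine continuous_of_continuousAt_zero F ?_
  rw [ContinuousAt, map_zero, tendsto_zero_iff_norm_tendsto_zero]
  have h := hp.tendsto 0
  rwa [map_zero] at h

lemma LocallySolid.continuous_of_monotone {E : Type*} [AddCommGroup E] [Lattice E]
    [AddLeftMono E] [Module ℝ E] [TopologicalSpace E] [IsTopologicalAddGroup E]
    [ContinuousConstSMul ℝ E] (hls : LocallySolid E) (F : E →ₗ[ℝ] ℝ) (hF : Monotone F)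
    {V : Set E} (hV : V ∈ 𝓝 0) (hFV : ∀ x ∈ V, 0 ≤ x → F x ≤ 1) : Continuous F := by
  obtain ⟨S, ⟨hS, hS_solid⟩, hSV⟩ := hls.mem_iff.1 hV
  refine F.continuous_of_abs_le_one hS fun x hx => (abs_map_le_map_abs hF x).trans ?_
  exact hFV _ (hSV (hS_solid (abs_abs x).le hx)) (abs_nonneg x)

theorem stmt19_general {E : Type*}
    [AddCommGroup E] [Lattice E] [Module ℝ E]
    [CovariantClass E E (· + ·) (· ≤ ·)]
    [TopologicalSpace E] [IsTopologicalAddGroup E] [ContinuousSMul ℝ E]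
    (hls : LocallySolid E)
    (hbarrel : ∀ S : Set E, IsClosed S → Convex ℝ S → Balanced ℝ S → Absorbent ℝ S →
      S ∈ 𝓝 (0 : E)) :
    ∀ (ι : Type*) [Nonempty ι] [SemilatticeSup ι] (f : ι → E →ₗ[ℝ] ℝ) (F : E →ₗ[ℝ] ℝ),
      (∀ α, ∀ x : E, 0 ≤ x → 0 ≤ f α x) →
      (∀ α β, α ≤ β → ∀ x : E, 0 ≤ x → f α x ≤ f β x) →
      (∀ α, Continuous (f α)) →
      (∀ x : E, 0 ≤ x → IsLUB (Set.range fun α => f α x) (F x)) →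
      Continuous F := by
  intro ι _ _ f F hpos _ hcont hF
  have : IsOrderedAddMonoid E := { add_le_add_left := fun _ _ h c => add_le_add_left h c }
  have : BarrelledSpace ℝ E := .of_barrel_mem_nhds hbarrel
  have hf_mono : ∀ α, Monotone (f α) := fun α => (monotone_iff_map_nonneg _).2 (hpos α)
  have hf_le_F : ∀ α x, 0 ≤ x → f α x ≤ F x := fun α x hx => (hF x hx).1 ⟨α, rfl⟩
  have hF_mono : Monotone F := (monotone_iff_map_nonneg F).2 fun x hx =>
    (hpos (Classical.arbitrary ι) x hx).trans (hf_le_F _ x hx)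
  let p : ι → Seminorm ℝ E := fun α => (normSeminorm ℝ ℝ).comp (f α)
  have hbdd : BddAbove (range p) := Seminorm.bddAbove_range_iff.2 fun x =>
    ⟨F |x|, forall_mem_range.2 fun α =>
      (abs_map_le_map_abs (hf_mono α) x).trans (hf_le_F α |x| (abs_nonneg x))⟩
  have hsup : Continuous ⇑(⨆ α, p α) := by
    rw [Seminorm.coe_iSup_eq hbdd]
    exact Seminorm.continuous_iSup p (fun α => continuous_norm.comp (hcont α)) hbdd
  refine hls.continuous_of_monotone F hF_mono ((Seminorm.continuous_iff one_pos).1 hsup)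
    fun x hx hx0 => (hF x hx0).2 ?_
  rintro _ ⟨α, rfl⟩
  rw [Seminorm.mem_ball_zero] at hx
  exact (le_abs_self _).trans ((le_ciSup hbdd α) x |>.trans hx.le)

/-- In a barrelled locally convex-solid Riesz space, the topological dual is a band in
the order dual: if `0 ≤ f_α ↑ f` in the order dual with each `f_α` continuous, then `f`
is continuous.  Barrelledness is expressed by: every barrel (closed, convex, balanced,
absorbing set) is a neighborhood of zero. -/
theorem stmt19 {E : Type*}
    [AddCommGroup E] [Lattice E] [Module ℝ E]
    [CovariantClass E E (· + ·) (· ≤ ·)] [PosSMulMono ℝ E]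
    [TopologicalSpace E] [IsTopologicalAddGroup E] [ContinuousSMul ℝ E]
    [LocallyConvexSpace ℝ E]
    (hls : LocallySolid E)
    (hbarrel : ∀ S : Set E, IsClosed S → Convex ℝ S → Balanced ℝ S → Absorbent ℝ S →
      S ∈ 𝓝 (0 : E)) :
    ∀ (ι : Type*) [Nonempty ι] [SemilatticeSup ι] (f : ι → E →ₗ[ℝ] ℝ) (F : E →ₗ[ℝ] ℝ),
      (∀ α, ∀ x : E, 0 ≤ x → 0 ≤ f α x) →
      (∀ α β, α ≤ β → ∀ x : E, 0 ≤ x → f α x ≤ f β x) →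
      (∀ α, Continuous (f α)) →
      (∀ x : E, 0 ≤ x → IsLUB (Set.range fun α => f α x) (F x)) →
      Continuous F :=
  stmt19_general hls hbarrel
end
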